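/- (Rematching, symmetric case) In the symmetric setup below, let ε̄ ≥ 0 and ε := (1+ε̄)^m − 1, and let R = (R_i)_{i∈Ā} be an ε̄-local optimum (with equal weights 1/n) of J with respect to the endowed valuations v̄_i; set R_i := ∅ for i ∈ A∖Ā. Then there exists a partial matching ρ : A → H ∪ {⊥} (i.e., ρ(i) = ρ(k) ≠ ⊥ implies i = k) such that ∏_{i∈A} v_i(R_i ∪ {ρ(i)})^{1/n} ≥ OPT / (4·(1+ε)), where R_i ∪ {⊥} is interpreted as R_i. -/

import Mathlib

/-!
Fix an optimal partition `O`. For an item `j ∈ J` held in `R` by `k`, let `θ j ≥ 1` be the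
factor by which `k`'s endowed value drops when `j` is removed. Local optimality says that any
other agent `i` gains from `j` at most `((1 + ε')^n θ j - 1)` times its endowed value, while
submodularity makes the excesses `θ j - 1` sum to at most one per holder. Adding the items of `H`,
each worth at most the best `H`-item of `O i`, gives `v i (O i) ≤ κ i * d i` with
`d i ≥ max (v i (R i)) (v i {ℓ i}) (best H-item of O i)` and `∑ κ i ≤ 4 (1 + ε) n`, so
AM–GM yields `OPT ≤ 4 (1 + ε) (∏ d i)^(1/n)`.

The values `d i` are then realised by a matching into `H`. Every agent whose best `H`-item
beats its other options points to the agent to whom `τ` gives that item. Chains of pointers that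
end at an agent preferring its endowment item `ℓ` keep `τ`: shifting `τ` along the chain and
handing `ℓ` to its end is again injective, so optimality of `τ` pays for the whole chain. All
other pointing agents take their best `H`-item, and the remaining agents keep `R` alone.
-/

open Finset Relation

def IsSubmodular {G : Type*} [DecidableEq G] (v : Finset G → ℝ) : Prop :=
  ∀ S T, v (S ∩ T) + v (S ∪ T) ≤ v S + v T

namespace IsSubmodular

variable {G : Type*} [DecidableEq G] {v : Finset G → ℝ}

theorem union_singleton_le (hv : IsSubmodular v) (hmono : Monotone v) (h0 : v ∅ = 0)
    (S : Finset G) (j : G) : v (S ∪ {j}) ≤ v S + v {j} := by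
  have := hmono (empty_subset (S ∩ {j}))
  linarith [hv S {j}]

theorem le_add_sum_marginal (hv : IsSubmodular v) (R T : Finset G) :
    v (R ∪ T) ≤ v R + ∑ j ∈ T, (v (R ∪ {j}) - v R) := by
  induction T using Finset.induction_on with
  | empty => simp
  | @insert j T hj ih =>
    have hinter : (R ∪ T) ∩ (R ∪ {j}) = R := by grind
    have hunion : (R ∪ T) ∪ (R ∪ {j}) = R ∪ insert j T := by grind
    have := hv (R ∪ T) (R ∪ {j})
    rw [hinter, hunion] at this
    rw [sum_insert hj]
    linarith

theorem le_sum_singleton (hv : IsSubmodular v) (h0 : v ∅ = 0) (S : Finset G) :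
    v S ≤ ∑ x ∈ S, v {x} := by
  simpa [h0] using hv.le_add_sum_marginal ∅ S

theorem exists_singleton_pos (hv : IsSubmodular v) (h0 : v ∅ = 0) {S : Finset G}
    (hS : 0 < v S) : ∃ x ∈ S, 0 < v {x} := by
  by_contra! h
  exact (hS.trans_le (hv.le_sum_singleton h0 S)).not_ge (sum_nonpos h)

theorem sum_sub_erase_le (hv : IsSubmodular v) (R : Finset G) {T : Finset G} (hT : T ⊆ R) :
    ∑ j ∈ T, (v R - v (R.erase j)) ≤ v R - v (R \ T) := by
  induction T using Finset.induction_on with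
  | empty => simp
  | @insert j T hj ih =>
    have hinter : R.erase j ∩ (R \ T) = R \ insert j T := by grind
    have hunion : R.erase j ∪ (R \ T) = R := by grind
    have := hv (R.erase j) (R \ T)
    rw [hinter, hunion] at this
    rw [sum_insert hj]
    linarith [ih ((subset_insert j T).trans hT)]

theorem sum_endowed_ratio_sub_one_le_one (hv : IsSubmodular v) (hmono : Monotone v)
    (h0 : v ∅ = 0) {l : ℝ} (hl : 0 < l) {R : Finset G} (hR : ∀ j ∈ R, v {j} ≤ l) :
    ∑ j ∈ R, ((l + v R) / (l + v (R.erase j)) - 1) ≤ 1 := by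
  have hnonneg : ∀ S, 0 ≤ v S := fun S => h0 ▸ hmono (empty_subset S)
  set M := max l (v R)
  have hM : 0 < M := hl.trans_le (le_max_left _ _)
  have hterm : ∀ j ∈ R, (l + v R) / (l + v (R.erase j)) - 1 ≤ (v R - v (R.erase j)) / M := by
    intro j hj
    have hpos : 0 < l + v (R.erase j) := by linarith [hnonneg (R.erase j)]
    have hdrop : v R ≤ v (R.erase j) + l := by
      have := hv.union_singleton_le hmono h0 (R.erase j) j
      rw [show R.erase j ∪ {j} = R by grind] at this
      linarith [hR j hj]
    rw [div_sub_one hpos.ne', add_sub_add_left_eq_sub]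
    exact div_le_div_of_nonneg_left (by linarith [hmono (R.erase_subset j)]) hM
      (max_le (by linarith [hnonneg (R.erase j)]) (by linarith))
  calc ∑ j ∈ R, ((l + v R) / (l + v (R.erase j)) - 1)
      ≤ ∑ j ∈ R, (v R - v (R.erase j)) / M := sum_le_sum hterm
    _ = (∑ j ∈ R, (v R - v (R.erase j))) / M := (sum_div ..).symm
    _ ≤ v R / M := by
        gcongr
        simpa [h0] using hv.sum_sub_erase_le R subset_rfl
    _ ≤ 1 := (div_le_one hM).2 (le_max_right _ _)

theorem le_mul_one_add_sum (hv : IsSubmodular v) (hmono : Monotone v) {R O : Finset G}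
    {ω : G → ℝ} {d : ℝ} (hω : ∀ j ∈ O, 0 ≤ ω j) (hR : v R ≤ d) (hd : 0 ≤ d)
    (hmarg : ∀ j ∈ O \ R, v (R ∪ {j}) ≤ v R + ω j * d) :
    v O ≤ (1 + ∑ j ∈ O, ω j) * d := by
  have hterm : ∀ j ∈ O, v (R ∪ {j}) - v R ≤ ω j * d := fun j hj => by
    by_cases hjR : j ∈ R
    · rw [union_eq_left.2 (singleton_subset_iff.2 hjR), sub_self]
      exact mul_nonneg (hω j hj) hd
    · linarith [hmarg j (mem_sdiff.2 ⟨hj, hjR⟩)]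
  calc v O ≤ v (R ∪ O) := hmono subset_union_right
    _ ≤ v R + ∑ j ∈ O, (v (R ∪ {j}) - v R) := hv.le_add_sum_marginal R O
    _ ≤ d + ∑ j ∈ O, ω j * d := add_le_add hR (sum_le_sum hterm)
    _ = (1 + ∑ j ∈ O, ω j) * d := by rw [add_mul, one_mul, sum_mul]

end IsSubmodular

theorem prod_rpow_le_prod_rpow_iff {ι : Type*} {s : Finset ι} {f g : ι → ℝ} {r : ℝ} (hr : 0 < r)
    (hf : ∀ i ∈ s, 0 ≤ f i) (hg : ∀ i ∈ s, 0 ≤ g i) :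
    ∏ i ∈ s, f i ^ r ≤ ∏ i ∈ s, g i ^ r ↔ ∏ i ∈ s, f i ≤ ∏ i ∈ s, g i := by
  rw [Real.finsetProd_rpow s f hf, Real.finsetProd_rpow s g hg,
    Real.rpow_le_rpow_iff (prod_nonneg hf) (prod_nonneg hg) hr]

theorem prod_le_prod_of_prod_le_of_eqOn_compl {ι : Type*} [Fintype ι]
    {f g : ι → ℝ} (S : Finset ι) (hfg : ∀ i ∉ S, f i = g i) (hg : ∀ i ∉ S, 0 < g i)
    (h : ∏ i, f i ≤ ∏ i, g i) : ∏ i ∈ S, f i ≤ ∏ i ∈ S, g i := by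
  classical
  rw [← prod_mul_prod_compl S f, ← prod_mul_prod_compl S g,
    prod_congr rfl fun i hi => hfg i (mem_compl.1 hi)] at h
  exact le_of_mul_le_mul_right h (prod_pos fun i hi => hg i (mem_compl.1 hi))

theorem prod_rpow_inv_card_le {ι : Type*} [Fintype ι] [Nonempty ι] {f κ d : ι → ℝ} {C : ℝ}
    (hf : ∀ i, 0 ≤ f i) (hκ : ∀ i, 0 ≤ κ i) (hd : ∀ i, 0 ≤ d i) (hfκd : ∀ i, f i ≤ κ i * d i)
    (hsum : ∑ i, κ i ≤ C * Fintype.card ι) :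
    ∏ i, f i ^ ((Fintype.card ι : ℝ)⁻¹) ≤ C * ∏ i, d i ^ ((Fintype.card ι : ℝ)⁻¹) := by
  set w := ((Fintype.card ι : ℝ)⁻¹)
  have hcard : (0 : ℝ) < Fintype.card ι := by exact_mod_cast Fintype.card_pos
  have hw : 0 ≤ w := by positivity
  have amgm : ∏ i, κ i ^ w ≤ C := by
    calc ∏ i, κ i ^ w ≤ ∑ i, w * κ i :=
          Real.geom_mean_le_arith_mean_weighted univ (fun _ => w) κ (fun _ _ => hw)
            (by simp [w, hcard.ne']) (fun i _ => hκ i)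
      _ = w * ∑ i, κ i := (mul_sum ..).symm
      _ ≤ w * (C * Fintype.card ι) := by gcongr
      _ = C := by rw [mul_left_comm, inv_mul_cancel₀ hcard.ne', mul_one]
  calc ∏ i, f i ^ w ≤ ∏ i, (κ i * d i) ^ w :=
        prod_le_prod (fun i _ => Real.rpow_nonneg (hf i) w)
          fun i _ => Real.rpow_le_rpow (hf i) (hfκd i) hw
    _ = (∏ i, κ i ^ w) * ∏ i, d i ^ w := by
        rw [← prod_mul_distrib]
        exact prod_congr rfl fun i _ => Real.mul_rpow (hκ i) (hd i)
    _ ≤ C * ∏ i, d i ^ w := by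
        gcongr
        exact prod_nonneg fun i _ => Real.rpow_nonneg (hd i) w

theorem mul_pow_sub_one_le {x : ℝ} (hx : 1 ≤ x) {n m : ℕ} (hnm : n ≤ m) :
    m * (x ^ n - 1) ≤ n * (x ^ m - 1) := by
  obtain ⟨k, rfl⟩ := Nat.exists_eq_add_of_le hnm
  have hmean : x ^ n - 1 ≤ n * x ^ n * (x - 1) := by
    have hgeom : ∑ i ∈ range n, x ^ i ≤ n * x ^ n := by
      simpa using sum_le_card_nsmul (range n) _ (x ^ n)
        fun i hi => pow_le_pow_right₀ hx (mem_range.1 hi).le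
    rw [← geom_sum_mul]
    exact mul_le_mul_of_nonneg_right hgeom (by linarith)
  have hbern : 1 + k * (x - 1) ≤ x ^ k := by
    simpa using one_add_mul_le_pow (a := x - 1) (by linarith) k
  have hxn : 1 ≤ x ^ n := one_le_pow₀ hx
  push_cast
  rw [pow_add]
  nlinarith [mul_le_mul_of_nonneg_left hbern (by positivity : (0:ℝ) ≤ n * x ^ n)]

theorem le_mul_div_mul_of_div_mul_div_le {a b c e t : ℝ} (ha : 0 < a) (hb : 0 < b) (he : 0 < e)
    (h : a / b * (c / e) ≤ t) : c ≤ t * (b / a) * e := by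
  rw [div_mul_div_comm, div_le_iff₀ (by positivity)] at h
  rw [mul_div_assoc', div_mul_eq_mul_div, le_div_iff₀ ha]
  nlinarith

theorem Relation.ReflTransGen.eq_of_right_unique {α : Type*} {r : α → α → Prop} {a b c : α}
    (hr : Relator.RightUnique r) (hab : ReflTransGen r a b) (hac : ReflTransGen r a c)
    (hb : ∀ x, ¬ r b x) (hc : ∀ x, ¬ r c x) : b = c := by
  rcases hab.total_of_right_unique hr hac with h | h
  · exact h.cases_head.resolve_right fun ⟨x, hx, _⟩ => hb x hx
  · exact (h.cases_head.resolve_right fun ⟨x, hx, _⟩ => hc x hx).symm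

def Demands {A G : Type*} (B : Finset A) (σ τ : A → G) (i k : A) : Prop := i ∈ B ∧ σ i = τ k

section Rematching

variable {A G : Type*} {τ σ ℓ : A → G} {B : Finset A}

theorem injective_of_demand_chain {π : A → G} {S : Finset A} {a : A} (hτ : Function.Injective τ)
    (hσ : Set.InjOn σ B) (hστ : ∀ i ∈ B, σ i ∈ Set.range τ) (hπa : π a ∉ Set.range τ)
    (hπS : ∀ i ∈ S, i ≠ a → i ∈ B ∧ π i = σ i ∧ ∃ k ∈ S, σ i = τ k)
    (hπτ : ∀ i ∉ S, π i = τ i) : Function.Injective π := by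
  classical
  have hπ : π = (S : Set A).piecewise π τ :=
    funext fun i => by by_cases hi : i ∈ S <;> simp [hi, hπτ]
  rw [hπ]
  refine (Set.injective_piecewise_iff _).2 ⟨fun i hi k hk hik => ?_, hτ.injOn, ?_⟩
  · by_cases hia : i = a <;> by_cases hka : k = a
    · rw [hia, hka]
    · obtain ⟨hkB, hkσ, -⟩ := hπS k hk hka
      exact absurd (hia ▸ hik ▸ hkσ ▸ hστ k hkB) hπa
    · obtain ⟨hiB, hiσ, -⟩ := hπS i hi hia
      exact absurd (hka ▸ hik ▸ hiσ ▸ hστ i hiB) hπa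
    · obtain ⟨hiB, hiσ, -⟩ := hπS i hi hia
      obtain ⟨hkB, hkσ, -⟩ := hπS k hk hka
      exact hσ hiB hkB (hiσ ▸ hkσ ▸ hik)
  · intro i hi k hk hik
    by_cases hia : i = a
    · exact hπa ⟨k, (hia ▸ hik).symm⟩
    · obtain ⟨-, hiσ, k', hk', hσk'⟩ := hπS i hi hia
      exact hk (hτ (hσk' ▸ hiσ ▸ hik) ▸ hk')

variable [Fintype A] {u : A → G → ℝ} {d : A → ℝ}

theorem prod_le_prod_of_demand_chain (hτ : Function.Injective τ)
    (hτpos : ∀ i, 0 < u i (τ i))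
    (hτopt : ∀ π : A → G, Function.Injective π → ∏ i, u i (π i) ≤ ∏ i, u i (τ i))
    (hσ : Set.InjOn σ B) (hστ : ∀ i ∈ B, σ i ∈ Set.range τ)
    (hd : ∀ i, 0 ≤ d i) (hdB : ∀ i ∈ B, d i ≤ u i (σ i))
    {a : A} (hℓ : ℓ a ∉ Set.range τ) (hda : d a ≤ u a (ℓ a))
    {S : Finset A} (hS : ∀ i, i ∈ S ↔ ReflTransGen (Demands B σ τ) i a) :
    ∏ i ∈ S, d i ≤ ∏ i ∈ S, u i (τ i) := by
  classical
  have hdemand : ∀ i ∈ S, i ≠ a → i ∈ B ∧ ∃ k ∈ S, σ i = τ k := by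
    intro i hi hia
    obtain ⟨k, ⟨hiB, hik⟩, hka⟩ := TransGen.head'_iff.1
      ((reflTransGen_iff_eq_or_transGen.1 ((hS i).1 hi)).resolve_left (Ne.symm hia))
    exact ⟨hiB, k, (hS k).2 hka, hik⟩
  set π : A → G := fun i => if i = a then ℓ a else if i ∈ S then σ i else τ i
  have hπS : ∀ i ∈ S, i ≠ a → π i = σ i := fun i hi hia => by simp [π, hi, hia]
  have hπτ : ∀ i ∉ S, π i = τ i := fun i hi => by
    simp [π, hi, show i ≠ a from fun h => hi ((hS i).2 (h ▸ .refl))]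
  have hπ : Function.Injective π := injective_of_demand_chain hτ hσ hστ (by simpa [π] using hℓ)
    (fun i hi hia => ⟨(hdemand i hi hia).1, hπS i hi hia, (hdemand i hi hia).2⟩) hπτ
  calc ∏ i ∈ S, d i ≤ ∏ i ∈ S, u i (π i) := by
        refine prod_le_prod (fun i _ => hd i) fun i hi => ?_
        by_cases hia : i = a
        · simpa [π, hia] using hia ▸ hda
        · exact hπS i hi hia ▸ hdB i (hdemand i hi hia).1
    _ ≤ ∏ i ∈ S, u i (τ i) := prod_le_prod_of_prod_le_of_eqOn_compl S
        (fun i hi => congrArg (u i) (hπτ i hi)) (fun i _ => hτpos i) (hτopt π hπ)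

theorem prod_le_prod_of_demand_chains [DecidableEq A] (hτ : Function.Injective τ)
    (hτpos : ∀ i, 0 < u i (τ i))
    (hτopt : ∀ π : A → G, Function.Injective π → ∏ i, u i (π i) ≤ ∏ i, u i (τ i))
    (hσ : Set.InjOn σ B) (hστ : ∀ i ∈ B, σ i ∈ Set.range τ) (hd : ∀ i, 0 ≤ d i)
    (hdB : ∀ i ∈ B, d i ≤ u i (σ i)) {X : Finset A}
    (hX : ∀ a ∈ X, a ∉ B ∧ ℓ a ∉ Set.range τ ∧ d a ≤ u a (ℓ a)) {S : A → Finset A}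
    (hS : ∀ a i, i ∈ S a ↔ ReflTransGen (Demands B σ τ) i a) :
    ∏ i ∈ X.biUnion S, d i ≤ ∏ i ∈ X.biUnion S, u i (τ i) := by
  have hunique : Relator.RightUnique (Demands B σ τ) :=
    fun _ _ _ hk hk' => hτ (hk.2.symm.trans hk'.2)
  have hdisj : (X : Set A).PairwiseDisjoint S := by
    refine fun a ha a' ha' haa' => disjoint_left.2 fun i hia hia' => haa' ?_
    exact ((hS a i).1 hia).eq_of_right_unique hunique ((hS a' i).1 hia')
      (fun k h => (hX a ha).1 h.1) (fun k h => (hX a' ha').1 h.1)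
  rw [prod_biUnion hdisj, prod_biUnion hdisj]
  exact prod_le_prod (fun a _ => prod_nonneg fun i _ => hd i) fun a ha =>
    prod_le_prod_of_demand_chain hτ hτpos hτopt hσ hστ hd hdB (hX a ha).2.1 (hX a ha).2.2 (hS a)

theorem exists_rematching {s : A → Option G → ℝ} (hτ : Function.Injective τ)
    (hτpos : ∀ i, 0 < u i (τ i))
    (hτopt : ∀ π : A → G, Function.Injective π → ∏ i, u i (π i) ≤ ∏ i, u i (τ i))
    (hσ : Set.InjOn σ B) (hστ : ∀ i ∈ B, σ i ∈ Set.range τ)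
    (hd : ∀ i, 0 ≤ d i) (hdB : ∀ i ∈ B, d i ≤ u i (σ i))
    (hdout : ∀ i ∉ B, d i ≤ s i none ∨ ℓ i ∉ Set.range τ ∧ d i ≤ u i (ℓ i))
    (hs : ∀ i x, u i x ≤ s i (some x)) :
    ∃ ρ : A → Option G, (∀ i, ∀ x ∈ ρ i, x ∈ Set.range τ) ∧
      (∀ i k x, ρ i = some x → ρ k = some x → i = k) ∧ ∏ i, d i ≤ ∏ i, s i (ρ i) := by
  classical
  set X := univ.filter fun a => a ∉ B ∧ ¬ d a ≤ s a none
  have hX : ∀ a ∈ X, a ∉ B ∧ ℓ a ∉ Set.range τ ∧ d a ≤ u a (ℓ a) := fun a ha => by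
    obtain ⟨haB, hda⟩ := (mem_filter.1 ha).2
    exact ⟨haB, (hdout a haB).resolve_left hda⟩
  set chain : A → Finset A := fun a => univ.filter (ReflTransGen (Demands B σ τ) · a)
  set V := X.biUnion chain
  set D := B \ V
  have hXV : ∀ a ∈ X, a ∈ V := fun a ha => mem_biUnion.2 ⟨a, ha, mem_filter.2 ⟨mem_univ a, .refl⟩⟩
  have hDV : ∀ l ∈ D, ∀ i ∈ V, σ l ≠ τ i := by
    intro l hl i hi hli
    obtain ⟨hlB, hlV⟩ := mem_sdiff.1 hl
    obtain ⟨a, ha, hia⟩ := mem_biUnion.1 hi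
    exact hlV (mem_biUnion.2 ⟨a, ha, by
      simpa [chain] using ReflTransGen.head ⟨hlB, hli⟩ (mem_filter.1 hia).2⟩)
  set ρ : A → Option G := fun i => if i ∈ D then some (σ i) else if i ∈ V then some (τ i) else none
  have hρsome : ∀ i x, ρ i = some x → (i ∈ D ∧ σ i = x) ∨ (i ∈ V ∧ τ i = x) := by
    intro i x h
    simp only [ρ] at h
    split_ifs at h with hiD hiV <;> cases h
    exacts [.inl ⟨hiD, rfl⟩, .inr ⟨hiV, rfl⟩]
  refine ⟨ρ, fun i x hx => ?_, fun i k x hi hk => ?_, ?_⟩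
  · rcases hρsome i x hx with ⟨hiD, rfl⟩ | ⟨-, rfl⟩
    exacts [hστ i (mem_sdiff.1 hiD).1, ⟨i, rfl⟩]
  · rcases hρsome i x hi with ⟨hiD, rfl⟩ | ⟨hiV, rfl⟩ <;>
      rcases hρsome k _ hk with ⟨hkD, hik⟩ | ⟨hkV, hik⟩
    exacts [hσ (mem_sdiff.1 hiD).1 (mem_sdiff.1 hkD).1 hik.symm,
      absurd hik.symm (hDV i hiD k hkV), absurd hik (hDV k hkD i hiV), hτ hik.symm]
  have hρV : ∀ i ∈ V, u i (τ i) ≤ s i (ρ i) := fun i hi => by simpa [ρ, D, hi] using hs i (τ i)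
  have hV : ∏ i ∈ V, d i ≤ ∏ i ∈ V, s i (ρ i) :=
    (prod_le_prod_of_demand_chains hτ hτpos hτopt hσ hστ hd hdB hX fun a i => by
      simp [chain]).trans (prod_le_prod (fun i _ => (hτpos i).le) hρV)
  have hVc : ∏ i ∈ Vᶜ, d i ≤ ∏ i ∈ Vᶜ, s i (ρ i) := by
    refine prod_le_prod (fun i _ => hd i) fun i hi => ?_
    have hiV := mem_compl.1 hi
    by_cases hiD : i ∈ D
    · simpa [ρ, hiD] using (hdB i (mem_sdiff.1 hiD).1).trans (hs i (σ i))
    · rw [show ρ i = none by simp [ρ, hiD, hiV]]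
      have hiB : i ∉ B := fun hiB => hiD (mem_sdiff.2 ⟨hiB, hiV⟩)
      exact not_not.1 fun h => hiV (hXV i (mem_filter.2 ⟨mem_univ i, hiB, h⟩))
  rw [← prod_mul_prod_compl V d, ← prod_mul_prod_compl V]
  exact mul_le_mul hV hVc (prod_nonneg fun i _ => hd i)
    (prod_nonneg fun i hi => (hτpos i).le.trans (hρV i hi))

end Rematching

theorem sum_le_card_of_cover {A G : Type*} [DecidableEq G] {Abar : Finset A}
    {R : A → Finset G} {J : Finset G} (hRdisj : ∀ i k, i ≠ k → Disjoint (R i) (R k))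
    (hRcover : Abar.biUnion R = J) {hold : G → A}
    (hhold : ∀ j ∈ J, hold j ∈ Abar ∧ j ∈ R (hold j)) {φ : A → G → ℝ}
    (hφ : ∀ k ∈ Abar, ∑ j ∈ R k, φ k j ≤ 1) :
    ∑ j ∈ J, φ (hold j) j ≤ #Abar := by
  have hholdR : ∀ k ∈ Abar, ∀ j ∈ R k, hold j = k := fun k hk j hj => by
    by_contra hne
    have hjJ : j ∈ J := hRcover ▸ mem_biUnion.2 ⟨k, hk, hj⟩
    exact disjoint_left.1 (hRdisj _ _ hne) (hhold j hjJ).2 hj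
  rw [← hRcover, sum_biUnion fun i _ k _ hik => hRdisj i k hik]
  calc ∑ k ∈ Abar, ∑ j ∈ R k, φ (hold j) j = ∑ k ∈ Abar, ∑ j ∈ R k, φ k j :=
        sum_congr rfl fun k hk => sum_congr rfl fun j hj => by rw [hholdR k hk j hj]
    _ ≤ ∑ _k ∈ Abar, 1 := sum_le_sum hφ
    _ = #Abar := by simp

theorem sum_one_add_sum_weight_le {G A : Type*} [Fintype G] [DecidableEq G] [Fintype A]
    {O : A → Finset G} (hOdisj : ∀ i k, i ≠ k → Disjoint (O i) (O k))
    (hOcov : univ.biUnion O = univ) {H : Finset G} (hH : #H ≤ Fintype.card A) {x : ℝ}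
    (hx : 1 ≤ x) (hcard : Fintype.card A ≤ Fintype.card G) {θ : G → ℝ}
    (hθsum : ∑ j ∈ univ \ H, (θ j - 1) ≤ Fintype.card A) :
    ∑ i, (1 + ∑ j ∈ O i, if j ∈ H then 1 else 2 * (x ^ Fintype.card A * θ j - 1)) ≤
      4 * x ^ Fintype.card G * Fintype.card A := by
  set n := Fintype.card A
  set m := Fintype.card G
  set t := x ^ n
  set ω : G → ℝ := fun j => if j ∈ H then 1 else 2 * (t * θ j - 1)
  have hpart : ∑ i, (1 + ∑ j ∈ O i, ω j) = n + (∑ j ∈ univ \ H, ω j + ∑ j ∈ H, ω j) := by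
    rw [sum_add_distrib, ← sum_biUnion fun i _ k _ hik => hOdisj i k hik, hOcov,
      sum_sdiff (subset_univ H)]
    simp [n]
  have hH1 : ∑ j ∈ H, ω j = #H := by
    rw [sum_congr rfl fun j hj => if_pos hj, sum_const, nsmul_one]
  have hJ2 : ∑ j ∈ univ \ H, ω j =
      2 * (t * ∑ j ∈ univ \ H, (θ j - 1) + #(univ \ H) * (t - 1)) := by
    rw [card_eq_sum_ones, Nat.cast_sum, sum_mul, mul_sum, ← sum_add_distrib, mul_sum]
    refine sum_congr rfl fun j hj => ?_
    simp only [ω, if_neg (mem_sdiff.1 hj).2]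
    ring
  have ht : 1 ≤ t := one_le_pow₀ hx
  have hJ_le : (#(univ \ H) : ℝ) ≤ m := by exact_mod_cast card_le_univ _
  have hH_le : (#H : ℝ) ≤ n := by exact_mod_cast hH
  rw [hpart, hH1, hJ2]
  nlinarith [mul_pow_sub_one_le hx hcard, mul_le_mul_of_nonneg_left hθsum (by linarith : 0 ≤ t),
    mul_le_mul_of_nonneg_right hJ_le (by linarith : 0 ≤ t - 1),
    mul_le_mul_of_nonneg_right (pow_le_pow_right₀ hx hcard) (Nat.cast_nonneg n : (0 : ℝ) ≤ n)]

theorem prod_rpow_le_of_marginal_gain_le {G A : Type*} [Fintype G] [DecidableEq G] [Fintype A]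
    [Nonempty A] {v : A → Finset G → ℝ} (hmono : ∀ i, Monotone (v i))
    (hsub : ∀ i, IsSubmodular (v i)) (hv0 : ∀ i, v i ∅ = 0) {O : A → Finset G}
    (hOdisj : ∀ i k, i ≠ k → Disjoint (O i) (O k)) (hOcov : univ.biUnion O = univ)
    {H : Finset G} (hH : #H ≤ Fintype.card A) {x : ℝ} (hx : 1 ≤ x)
    (hcard : Fintype.card A ≤ Fintype.card G) {θ : G → ℝ} (hθ : ∀ j ∉ H, 1 ≤ θ j)
    (hθsum : ∑ j ∈ univ \ H, (θ j - 1) ≤ Fintype.card A) {R : A → Finset G} {d e : A → ℝ}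
    (hdR : ∀ i, v i (R i) ≤ d i) (hed : ∀ i, e i ≤ 2 * d i)
    (hdH : ∀ i, ∀ h ∈ O i, h ∈ H → v i {h} ≤ d i)
    (hgain : ∀ i, ∀ j ∈ O i \ R i, j ∉ H →
      v i (R i ∪ {j}) ≤ v i (R i) + (x ^ Fintype.card A * θ j - 1) * e i) :
    ∏ i, v i (O i) ^ ((Fintype.card A : ℝ)⁻¹) ≤
      4 * x ^ Fintype.card G * ∏ i, d i ^ ((Fintype.card A : ℝ)⁻¹) := by
  set t := x ^ Fintype.card A
  have hnonneg : ∀ i S, 0 ≤ v i S := fun i S => hv0 i ▸ hmono i (empty_subset S)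
  have hd : ∀ i, 0 ≤ d i := fun i => (hnonneg i _).trans (hdR i)
  have ht : 1 ≤ t := one_le_pow₀ hx
  -- `ω j` bounds the marginal value of `j ∈ O i` over `R i`, in units of `d i`
  set ω : G → ℝ := fun j => if j ∈ H then 1 else 2 * (t * θ j - 1)
  have hω : ∀ j, 0 ≤ ω j := fun j => by
    by_cases hj : j ∈ H
    · simp [ω, hj]
    · simp only [ω, hj, if_false]; nlinarith [hθ j hj]
  have hagent : ∀ i, v i (O i) ≤ (1 + ∑ j ∈ O i, ω j) * d i := by
    intro i
    refine (hsub i).le_mul_one_add_sum (hmono i) (fun j _ => hω j) (hdR i) (hd i) fun j hj => ?_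
    by_cases hjH : j ∈ H
    · simp only [ω, hjH, if_true, one_mul]
      linarith [(hsub i).union_singleton_le (hmono i) (hv0 i) (R i) j,
        hdH i j (mem_sdiff.1 hj).1 hjH]
    · have htθ : 0 ≤ t * θ j - 1 := by nlinarith [hθ j hjH]
      simp only [ω, hjH, if_false]
      nlinarith [hgain i j hj hjH, mul_le_mul_of_nonneg_left (hed i) htθ]
  exact prod_rpow_inv_card_le (fun i => hnonneg i _)
    (fun i => add_nonneg zero_le_one (sum_nonneg fun j _ => hω j)) hd hagent
    (sum_one_add_sum_weight_le hOdisj hOcov hH hx hcard hθsum)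

theorem prod_rpow_le_of_local_optimum {G A : Type*} [Fintype G] [DecidableEq G] [Fintype A]
    [Nonempty A] {v : A → Finset G → ℝ} (hmono : ∀ i, Monotone (v i))
    (hsub : ∀ i, IsSubmodular (v i)) (hv0 : ∀ i, v i ∅ = 0) {O : A → Finset G}
    (hOdisj : ∀ i k, i ≠ k → Disjoint (O i) (O k)) (hOcov : univ.biUnion O = univ)
    {H J : Finset G} (hH : #H ≤ Fintype.card A) (hJ : J = univ \ H)
    {Abar : Finset A} (hAbar : Abar = univ.filter (fun i => 0 < v i J))
    {ℓ : A → G} (hℓ : ∀ i ∈ Abar, ∀ j ∈ J, v i {j} ≤ v i {ℓ i})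
    {vb : A → Finset G → ℝ} (hvb : ∀ i S, vb i S = v i {ℓ i} + v i S)
    {ε' : ℝ} (hε' : 0 ≤ ε') (hcard : Fintype.card A ≤ Fintype.card G) {R : A → Finset G}
    (hRdisj : ∀ i k, i ≠ k → Disjoint (R i) (R k)) (hRcover : Abar.biUnion R = J)
    (hloc : ∀ i ∈ Abar, ∀ k ∈ Abar, i ≠ k → ∀ j ∈ R i,
      (vb i ((R i).erase j) / vb i (R i)) * (vb k (R k ∪ {j}) / vb k (R k)) ≤
        (1 + ε') ^ Fintype.card A)
    {d : A → ℝ} (hdR : ∀ i, v i (R i) ≤ d i) (hdℓ : ∀ i ∈ Abar, v i {ℓ i} ≤ d i)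
    (hdH : ∀ i, ∀ h ∈ O i, h ∈ H → v i {h} ≤ d i) :
    ∏ i, v i (O i) ^ ((Fintype.card A : ℝ)⁻¹) ≤
      4 * (1 + ε') ^ Fintype.card G * ∏ i, d i ^ ((Fintype.card A : ℝ)⁻¹) := by
  classical
  have hnonneg : ∀ i S, 0 ≤ v i S := fun i S => hv0 i ▸ hmono i (empty_subset S)
  have hℓpos : ∀ i ∈ Abar, 0 < v i {ℓ i} := fun i hi => by
    obtain ⟨j, hj, hjpos⟩ := (hsub i).exists_singleton_pos (hv0 i) (by simpa [hAbar] using hi)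
    exact hjpos.trans_le (hℓ i hi j hj)
  have hvbpos : ∀ i ∈ Abar, ∀ S, 0 < vb i S := fun i hi S => by
    rw [hvb]; linarith [hℓpos i hi, hnonneg i S]
  have hJH : ∀ j, j ∈ J ↔ j ∉ H := fun j => by simp [hJ]
  choose! hold hholdA hholdR using fun j (hj : j ∈ J) => mem_biUnion.1 (hRcover ▸ hj)
  set θ : G → ℝ := fun j => vb (hold j) (R (hold j)) / vb (hold j) ((R (hold j)).erase j)
  have hθ : ∀ j ∈ J, 1 ≤ θ j := fun j hj => (one_le_div (hvbpos _ (hholdA j hj) _)).2 <| by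
    rw [hvb, hvb]; linarith [hmono (hold j) (erase_subset j (R (hold j)))]
  have hθsum : ∑ j ∈ J, (θ j - 1) ≤ #Abar :=
    sum_le_card_of_cover hRdisj hRcover (fun j hj => ⟨hholdA j hj, hholdR j hj⟩)
      (φ := fun k j => vb k (R k) / vb k ((R k).erase j) - 1) fun k hk => by
        simp only [hvb]
        exact (hsub k).sum_endowed_ratio_sub_one_le_one (hmono k) (hv0 k) (hℓpos k hk)
          fun j hj => hℓ k hk j (hRcover ▸ mem_biUnion.2 ⟨k, hk, hj⟩)
  refine prod_rpow_le_of_marginal_gain_le hmono hsub hv0 hOdisj hOcov hH (by linarith) hcard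
    (θ := θ) (fun j hj => hθ j ((hJH j).2 hj))
    (hJ ▸ hθsum.trans (by exact_mod_cast card_le_univ Abar))
    (e := fun i => if i ∈ Abar then vb i (R i) else 0) hdR (fun i => ?_) hdH
    fun i j hj hjH => ?_
  · split_ifs with hi
    · rw [hvb]; linarith [hdℓ i hi, hdR i]
    · linarith [hnonneg i (R i), hdR i]
  have hjJ := (hJH j).2 hjH
  by_cases hi : i ∈ Abar
  · have hki : hold j ≠ i := fun h => (mem_sdiff.1 hj).2 (h ▸ hholdR j hjJ)
    have hgain := le_mul_div_mul_of_div_mul_div_le (hvbpos _ (hholdA j hjJ) _)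
      (hvbpos _ (hholdA j hjJ) _) (hvbpos i hi _)
      (hloc _ (hholdA j hjJ) i hi hki j (hholdR j hjJ))
    simp only [hi, if_true, hvb i]
    rw [hvb i, hvb i] at hgain
    change _ ≤ _ * θ j * _ at hgain
    linarith
  · have hJ0 : v i J ≤ 0 := by simpa [hAbar] using hi
    simp only [hi, if_false, mul_zero, add_zero]
    linarith [(hsub i).union_singleton_le (hmono i) (hv0 i) (R i) j,
      hmono i (singleton_subset_iff.2 hjJ)]

theorem singleton_pos_of_partition_pos {G A : Type*} [Fintype A] [DecidableEq G]
    {v : A → Finset G → ℝ} (hmono : ∀ i, Monotone (v i)) (hsub : ∀ i, IsSubmodular (v i))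
    (hv0 : ∀ i, v i ∅ = 0) {O : A → Finset G} (hOdisj : ∀ i k, i ≠ k → Disjoint (O i) (O k))
    (hOpos : ∀ i, 0 < v i (O i)) {τ : A → G}
    (hτopt : ∀ π : A → G, Function.Injective π → ∏ i, v i {π i} ≤ ∏ i, v i {τ i}) (i : A) :
    0 < v i {τ i} := by
  choose x hxO hxpos using fun i => (hsub i).exists_singleton_pos (hv0 i) (hOpos i)
  have hx : Function.Injective x := fun i k h => by
    by_contra hne
    exact disjoint_left.1 (hOdisj i k hne) (hxO i) (h ▸ hxO k)
  have hprod : 0 < ∏ k, v k {τ k} := (prod_pos fun k _ => hxpos k).trans_le (hτopt x hx)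
  have hnonneg : 0 ≤ v i {τ i} := by simpa [hv0 i] using hmono i (empty_subset {τ i})
  exact hnonneg.lt_of_ne fun h => hprod.ne' (prod_eq_zero (mem_univ i) h.symm)

theorem exists_forall_mem_filter_le {α : Type*} (s : Finset α) (p : α → Prop) [DecidablePred p]
    (f : α → ℝ) (x₀ : α) : ∃ x, ∀ y ∈ s, p y → x ∈ s ∧ p x ∧ f y ≤ f x := by
  by_cases hne : (s.filter p).Nonempty
  · obtain ⟨x, hx, hmax⟩ := exists_max_image _ f hne
    exact ⟨x, fun y hy hpy =>
      ⟨(mem_filter.1 hx).1, (mem_filter.1 hx).2, hmax y (mem_filter.2 ⟨hy, hpy⟩)⟩⟩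
  · exact ⟨x₀, fun y hy hpy => absurd ⟨y, mem_filter.2 ⟨hy, hpy⟩⟩ hne⟩

theorem exists_dominated_rematching {G A : Type*} [Fintype A] [DecidableEq G]
    {v : A → Finset G → ℝ} (hmono : ∀ i, Monotone (v i)) (hv0 : ∀ i, v i ∅ = 0)
    {τ : A → G} (hτ : Function.Injective τ) (hτpos : ∀ i, 0 < v i {τ i})
    (hτopt : ∀ π : A → G, Function.Injective π → ∏ i, v i {π i} ≤ ∏ i, v i {τ i})
    {O : A → Finset G} (hOdisj : ∀ i k, i ≠ k → Disjoint (O i) (O k))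
    {Abar : Finset A} {ℓ : A → G} (hℓ : ∀ i ∈ Abar, ℓ i ∉ Set.range τ) (R : A → Finset G) :
    ∃ d : A → ℝ, (∀ i, v i (R i) ≤ d i) ∧ (∀ i ∈ Abar, v i {ℓ i} ≤ d i) ∧
      (∀ i, ∀ h ∈ O i, h ∈ Set.range τ → v i {h} ≤ d i) ∧
      ∃ ρ : A → Option G, (∀ i, ∀ g ∈ ρ i, g ∈ Set.range τ) ∧
        (∀ i k g, ρ i = some g → ρ k = some g → i = k) ∧
        ∏ i, d i ≤ ∏ i, v i (R i ∪ (ρ i).toFinset) := by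
  classical
  have hnonneg : ∀ i S, 0 ≤ v i S := fun i S => hv0 i ▸ hmono i (empty_subset S)
  set l : A → ℝ := fun i => if i ∈ Abar then v i {ℓ i} else 0
  choose σ hσ using fun i =>
    exists_forall_mem_filter_le (O i) (· ∈ Set.range τ) (fun h => v i {h}) (τ i)
  set B := univ.filter fun i =>
    σ i ∈ O i ∧ σ i ∈ Set.range τ ∧ max (v i (R i)) (l i) < v i {σ i}
  set d : A → ℝ := fun i => if i ∈ B then v i {σ i} else max (v i (R i)) (l i)
  have hσB : ∀ i ∈ B, σ i ∈ O i ∧ σ i ∈ Set.range τ ∧ max (v i (R i)) (l i) < v i {σ i} :=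
    fun i hi => (mem_filter.1 hi).2
  have hdmax : ∀ i, max (v i (R i)) (l i) ≤ d i := fun i => by
    by_cases hi : i ∈ B
    · simpa only [d, hi, if_true] using (hσB i hi).2.2.le
    · simp only [d, hi, if_false, le_refl]
  have hdH : ∀ i, ∀ h ∈ O i, h ∈ Set.range τ → v i {h} ≤ d i := fun i h hh hhτ => by
    obtain ⟨hσO, hστ, hle⟩ := hσ i h hh hhτ
    by_cases hi : i ∈ B
    · simpa only [d, hi, if_true] using hle
    · simp only [d, hi, if_false]
      exact hle.trans (not_lt.1 fun hlt => hi (mem_filter.2 ⟨mem_univ i, hσO, hστ, hlt⟩))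
  obtain ⟨ρ, hρτ, hρinj, hρ⟩ := exists_rematching (u := fun i x => v i {x})
    (s := fun i o => v i (R i ∪ o.toFinset)) (d := d) hτ hτpos hτopt
    (fun i hi k hk h => by
      by_contra hne
      exact disjoint_left.1 (hOdisj i k hne) (hσB i hi).1 (h ▸ (hσB k hk).1))
    (fun i hi => (hσB i hi).2.1) (fun i => (hnonneg i _).trans ((le_max_left _ _).trans (hdmax i)))
    (fun i hi => by simp only [d, hi, if_true, le_refl])
    (fun i hi => by
      simp only [d, hi, if_false, Option.toFinset_none, union_empty]
      by_cases hA : i ∈ Abar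
      · by_cases hlR : v i {ℓ i} ≤ v i (R i)
        · exact .inl (by simp [l, hA, hlR])
        · exact .inr ⟨hℓ i hA, by simp [l, hA, (not_le.1 hlR).le]⟩
      · exact .inl (by simp [l, hA, hnonneg]))
    (fun i x => hmono i (by simp))
  refine ⟨d, fun i => (le_max_left _ _).trans (hdmax i), fun i hi => ?_, hdH, ρ, hρτ, hρinj, hρ⟩
  simpa only [l, hi, if_true] using (le_max_right _ _).trans (hdmax i)

theorem rematching_symmetric_general {G A : Type*} [Fintype G] [DecidableEq G]
    [Fintype A]
    (n m : ℕ) (hn : n = Fintype.card A) (hm : m = Fintype.card G)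
    (hn1 : 1 ≤ n) (hnm : n ≤ m)
    (v : A → Finset G → ℝ)
    (hmono : ∀ i, ∀ S T : Finset G, S ⊆ T → v i S ≤ v i T)
    (hsubmod : ∀ i, ∀ S T : Finset G, v i (S ∩ T) + v i (S ∪ T) ≤ v i S + v i T)
    (hv0 : ∀ i, v i ∅ = 0)
    (OPT : ℝ) (hOPTpos : 0 < OPT)
    (hOPTex : ∃ P : A → Finset G, (∀ i k, i ≠ k → Disjoint (P i) (P k)) ∧
      Finset.univ.biUnion P = (univ : Finset G) ∧
      ∏ i, v i (P i) ^ ((n : ℝ)⁻¹) = OPT)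
    (τ : A → G) (hτinj : Function.Injective τ)
    (hτopt : ∀ τ' : A → G, Function.Injective τ' →
      ∏ i, v i {τ' i} ^ ((n : ℝ)⁻¹) ≤ ∏ i, v i {τ i} ^ ((n : ℝ)⁻¹))
    (H J : Finset G) (hH : H = Finset.univ.image τ) (hJ : J = univ \ H)
    (Abar : Finset A) (hAbar : Abar = univ.filter (fun i => 0 < v i J))
    (ℓ : A → G) (hℓ : ∀ i ∈ Abar, ℓ i ∈ J ∧ ∀ j ∈ J, v i {j} ≤ v i {ℓ i})
    (vb : A → Finset G → ℝ) (hvb : ∀ i S, vb i S = v i {ℓ i} + v i S)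
    (ε' ε : ℝ) (hε' : 0 ≤ ε') (hε : ε = (1 + ε') ^ m - 1)
    (R : A → Finset G)
    (hRdisj : ∀ i k, i ≠ k → Disjoint (R i) (R k))
    (hRcover : Abar.biUnion R = J)
    (hloc : ∀ i ∈ Abar, ∀ k ∈ Abar, i ≠ k → ∀ j ∈ R i,
      (vb i ((R i).erase j) / vb i (R i)) *
        (vb k (R k ∪ {j}) / vb k (R k)) ≤ (1 + ε') ^ n) :
    ∃ ρ : A → Option G,
      (∀ (i : A), ∀ g ∈ ρ i, g ∈ H) ∧
      (∀ (i k : A) (g : G), ρ i = some g → ρ k = some g → i = k) ∧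
      OPT / (4 * (1 + ε)) ≤ ∏ i, v i (R i ∪ (ρ i).toFinset) ^ ((n : ℝ)⁻¹) := by
  subst hn hm hε
  obtain ⟨O, hOdisj, hOcov, rfl⟩ := hOPTex
  have : Nonempty A := Fintype.card_pos_iff.1 hn1
  have hmono' : ∀ i, Monotone (v i) := fun i S T h => hmono i S T h
  have hnonneg : ∀ i S, 0 ≤ v i S := fun i S => by simpa [hv0 i] using hmono i ∅ S (empty_subset S)
  have hw : 0 < ((Fintype.card A : ℝ)⁻¹) := inv_pos.2 (by exact_mod_cast hn1)
  have hτopt' : ∀ π : A → G, Function.Injective π → ∏ i, v i {π i} ≤ ∏ i, v i {τ i} :=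
    fun π hπ => (prod_rpow_le_prod_rpow_iff hw (fun i _ => hnonneg i _)
      (fun i _ => hnonneg i _)).1 (hτopt π hπ)
  have hOpos : ∀ i, 0 < v i (O i) := fun i => (hnonneg i _).lt_of_ne fun h =>
    hOPTpos.ne' (prod_eq_zero (mem_univ i) (by rw [← h, Real.zero_rpow hw.ne']))
  have hHτ : ∀ x, x ∈ H ↔ x ∈ Set.range τ := by simp [hH]
  obtain ⟨d, hdR, hdℓ, hdH, ρ, hρτ, hρinj, hρ⟩ := exists_dominated_rematching hmono' hv0 hτinj
    (singleton_pos_of_partition_pos hmono' hsubmod hv0 hOdisj hOpos hτopt') hτopt' hOdisj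
    (fun i hi hℓτ => (mem_sdiff.1 (hJ ▸ (hℓ i hi).1)).2 ((hHτ _).2 hℓτ)) R
  refine ⟨ρ, fun i g hg => (hHτ g).2 (hρτ i g hg), hρinj, ?_⟩
  rw [add_sub_cancel, div_le_iff₀ (by positivity), mul_comm]
  calc ∏ i, v i (O i) ^ ((Fintype.card A : ℝ)⁻¹)
      ≤ 4 * (1 + ε') ^ Fintype.card G * ∏ i, d i ^ ((Fintype.card A : ℝ)⁻¹) :=
        prod_rpow_le_of_local_optimum hmono' hsubmod hv0 hOdisj hOcov
          (by rw [hH, card_image_of_injective _ hτinj, card_univ]) hJ hAbar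
          (fun i hi => (hℓ i hi).2) hvb hε' hnm hRdisj hRcover hloc hdR hdℓ
          fun i h hh hhH => hdH i h hh ((hHτ h).1 hhH)
    _ ≤ 4 * (1 + ε') ^ Fintype.card G *
          ∏ i, v i (R i ∪ (ρ i).toFinset) ^ ((Fintype.card A : ℝ)⁻¹) :=
        mul_le_mul_of_nonneg_left ((prod_rpow_le_prod_rpow_iff hw
          (fun i _ => (hnonneg i _).trans (hdR i)) fun i _ => hnonneg i _).2 hρ) (by positivity)

/-- (Rematching, symmetric case.)
Let `ε̄ ≥ 0`, `ε := (1+ε̄)^m − 1`, and let `R` be an `ε̄`-local optimum (with equal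
weights `1/n`) of `J` with respect to the endowed valuations; `R_i = ∅` for `i ∉ Ā`.
Then there exists a partial matching `ρ : A → H ∪ {⊥}` such that
`∏_{i∈A} v_i(R_i ∪ {ρ(i)})^{1/n} ≥ OPT / (4·(1+ε))`. -/
theorem rematching_symmetric {G A : Type*} [Fintype G] [DecidableEq G]
    [Fintype A] [DecidableEq A]
    (n m : ℕ) (hn : n = Fintype.card A) (hm : m = Fintype.card G)
    (hn1 : 1 ≤ n) (hnm : n ≤ m)
    (v : A → Finset G → ℝ)
    (hmono : ∀ i, ∀ S T : Finset G, S ⊆ T → v i S ≤ v i T)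
    (hsubmod : ∀ i, ∀ S T : Finset G, v i (S ∩ T) + v i (S ∪ T) ≤ v i S + v i T)
    (hv0 : ∀ i, v i ∅ = 0)
    (OPT : ℝ) (hOPTpos : 0 < OPT)
    (hOPTub : ∀ P : A → Finset G, (∀ i k, i ≠ k → Disjoint (P i) (P k)) →
      Finset.univ.biUnion P = (univ : Finset G) →
      ∏ i, v i (P i) ^ ((n : ℝ)⁻¹) ≤ OPT)
    (hOPTex : ∃ P : A → Finset G, (∀ i k, i ≠ k → Disjoint (P i) (P k)) ∧
      Finset.univ.biUnion P = (univ : Finset G) ∧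
      ∏ i, v i (P i) ^ ((n : ℝ)⁻¹) = OPT)
    (τ : A → G) (hτinj : Function.Injective τ)
    (hτopt : ∀ τ' : A → G, Function.Injective τ' →
      ∏ i, v i {τ' i} ^ ((n : ℝ)⁻¹) ≤ ∏ i, v i {τ i} ^ ((n : ℝ)⁻¹))
    (H J : Finset G) (hH : H = Finset.univ.image τ) (hJ : J = univ \ H)
    (Abar : Finset A) (hAbar : Abar = univ.filter (fun i => 0 < v i J))
    (ℓ : A → G) (hℓ : ∀ i ∈ Abar, ℓ i ∈ J ∧ ∀ j ∈ J, v i {j} ≤ v i {ℓ i})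
    (vb : A → Finset G → ℝ) (hvb : ∀ i S, vb i S = v i {ℓ i} + v i S)
    (ε' ε : ℝ) (hε' : 0 ≤ ε') (hε : ε = (1 + ε') ^ m - 1)
    (R : A → Finset G)
    (hRsub : ∀ i, R i ⊆ J) (hRout : ∀ i ∉ Abar, R i = ∅)
    (hRdisj : ∀ i k, i ≠ k → Disjoint (R i) (R k))
    (hRcover : Abar.biUnion R = J)
    (hloc : ∀ i ∈ Abar, ∀ k ∈ Abar, i ≠ k → ∀ j ∈ R i,
      (vb i ((R i).erase j) / vb i (R i)) *
        (vb k (R k ∪ {j}) / vb k (R k)) ≤ (1 + ε') ^ n) :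
    ∃ ρ : A → Option G,
      (∀ (i : A), ∀ g ∈ ρ i, g ∈ H) ∧
      (∀ (i k : A) (g : G), ρ i = some g → ρ k = some g → i = k) ∧
      OPT / (4 * (1 + ε)) ≤ ∏ i, v i (R i ∪ (ρ i).toFinset) ^ ((n : ℝ)⁻¹) :=
  rematching_symmetric_general n m hn hm hn1 hnm v hmono hsubmod hv0 OPT hOPTpos hOPTex τ hτinj
    hτopt H J hH hJ Abar hAbar ℓ hℓ vb hvb ε' ε hε' hε R hRdisj hRcover hloc
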